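/- arXiv:1810.06648 — 6 statements merged into one kernel-verified Lean document; each statement's English description precedes it below -/
import Mathlib

section
/- A density matrix ρ is a dark state, i.e. L(ρ) = 0 and ρ = PρP, if and only if H̃ρ − ρH̃ᴴ = 0 (where H̃ = H − i·Γ and H̃ᴴ is its conjugate transpose). In other words, the dark states are exactly the density matrices annihilated by the non-Hermitian part L_H̃(ρ) = −i(H̃ρ − ρH̃ᴴ) of the Lindblad generator. -/
open Matrix Complex BigOperators ComplexOrder

/-- Projection onto the ground-state indices. -/
noncomputable def Pg (Ng Ne : ℕ) : Matrix (Fin Ng ⊕ Fin Ne) (Fin Ng ⊕ Fin Ne) ℂ :=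
  Matrix.diagonal (Sum.elim (fun _ => 1) (fun _ => 0))

/-- Jump operator |g_i⟩⟨e_j|. -/
noncomputable def jump (Ng Ne : ℕ) (i : Fin Ng) (j : Fin Ne) :
    Matrix (Fin Ng ⊕ Fin Ne) (Fin Ng ⊕ Fin Ne) ℂ :=
  Matrix.single (Sum.inl i) (Sum.inr j) 1

/-- Decay operator Γ = Σ γ_{ij} σ_{ij}ᴴ σ_{ij}. -/
noncomputable def Gam (Ng Ne : ℕ) (γ : Fin Ng → Fin Ne → ℝ) :
    Matrix (Fin Ng ⊕ Fin Ne) (Fin Ng ⊕ Fin Ne) ℂ :=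
  ∑ i, ∑ j, (γ i j : ℂ) • ((jump Ng Ne i j)ᴴ * jump Ng Ne i j)

/-- The Lindblad generator. -/
noncomputable def Lindblad (Ng Ne : ℕ) (H : Matrix (Fin Ng ⊕ Fin Ne) (Fin Ng ⊕ Fin Ne) ℂ)
    (γ : Fin Ng → Fin Ne → ℝ) (ρ : Matrix (Fin Ng ⊕ Fin Ne) (Fin Ng ⊕ Fin Ne) ℂ) :
    Matrix (Fin Ng ⊕ Fin Ne) (Fin Ng ⊕ Fin Ne) ℂ :=
  (-Complex.I) • (H * ρ - ρ * H) +
    ∑ i, ∑ j, (γ i j : ℂ) •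
      (jump Ng Ne i j * ρ * (jump Ng Ne i j)ᴴ -
        (1 / 2 : ℂ) • ((jump Ng Ne i j)ᴴ * jump Ng Ne i j * ρ +
          ρ * ((jump Ng Ne i j)ᴴ * jump Ng Ne i j)))

/-!
If `ρ = PρP`, every excited row and column of `ρ` vanishes, so the jump operators and the diagonal
matrix `Γ` (supported on the excited indices) annihilate `ρ` from both sides: then
`L(ρ) = -i [H, ρ]` and `H̃ρ - ρH̃ᴴ = [H, ρ]`, and both sides of the equivalence say `[H, ρ] = 0`.
Conversely, the trace of `H̃ρ - ρH̃ᴴ` is `-2i tr(Γρ) = -2i Σ_j (Σ_i γ_ij) ρ(e_j, e_j)`. The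
populations `ρ(e_j, e_j)` are nonnegative and the rates positive, so they all vanish, and for a
positive semidefinite matrix a vanishing diagonal entry forces its row and column to vanish.
-/

namespace Matrix

section PosSemidef

variable {n 𝕜 : Type*} [Fintype n] [RCLike 𝕜] {ρ : Matrix n n 𝕜}

theorem PosSemidef.apply_eq_zero_of_diag_eq_zero [DecidableEq n] (hρ : ρ.PosSemidef) {a : n}
    (ha : ρ a a = 0) (b : n) : ρ b a = 0 ∧ ρ a b = 0 := by
  have hcol : ρ *ᵥ Pi.single a 1 = 0 :=
    (hρ.dotProduct_mulVec_zero_iff _).mp (by simpa [mulVec_single] using ha)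
  have hba : ρ b a = 0 := by simpa [mulVec_single] using congrFun hcol b
  exact ⟨hba, by rw [← hρ.isHermitian.apply a b, hba, star_zero]⟩

theorem PosSemidef.diag_eq_zero_of_trace_diagonal_mul_eq_zero [DecidableEq n]
    (hρ : ρ.PosSemidef) {d : n → 𝕜} (hd : ∀ a, 0 ≤ d a)
    (htr : (diagonal d * ρ).trace = 0) {a : n} (ha : 0 < d a) : ρ a a = 0 := by
  have hterm_nonneg : ∀ b ∈ Finset.univ, 0 ≤ d b * ρ b b :=
    fun b _ => mul_nonneg (hd b) hρ.diag_nonneg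
  have hterm : d a * ρ a a = 0 :=
    (Finset.sum_eq_zero_iff_of_nonneg hterm_nonneg).mp
      (by simpa [trace, diagonal_mul] using htr) a (Finset.mem_univ a)
  exact (mul_eq_zero.mp hterm).resolve_left ha.ne'

end PosSemidef

section SumIndex

variable {m n α : Type*}

def IsSupportedOnInl [Zero α] (ρ : Matrix (m ⊕ n) (m ⊕ n) α) : Prop :=
  ∀ j b, ρ (Sum.inr j) b = 0 ∧ ρ b (Sum.inr j) = 0

variable [Fintype m] [Fintype n] [DecidableEq m] [DecidableEq n] [NonUnitalNonAssocSemiring α]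
  {ρ : Matrix (m ⊕ n) (m ⊕ n) α}

theorem IsSupportedOnInl.diagonal_mul_eq_zero (hρ : ρ.IsSupportedOnInl) {d : m ⊕ n → α}
    (hd : ∀ i, d (Sum.inl i) = 0) : diagonal d * ρ = 0 := by
  ext (a | a) b <;> simp [diagonal_mul, hd, (hρ _ _).1]

theorem IsSupportedOnInl.mul_diagonal_eq_zero (hρ : ρ.IsSupportedOnInl) {d : m ⊕ n → α}
    (hd : ∀ i, d (Sum.inl i) = 0) : ρ * diagonal d = 0 := by
  ext a (b | b) <;> simp [mul_diagonal, hd, (hρ _ _).2]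

theorem IsSupportedOnInl.single_inr_mul_eq_zero (hρ : ρ.IsSupportedOnInl) (a : m ⊕ n) (j : n)
    (c : α) : single a (Sum.inr j) c * ρ = 0 := by
  ext a' b
  by_cases h : a' = a
  · rw [h, single_mul_apply_same, (hρ j b).1, mul_zero, zero_apply]
  · rw [single_mul_apply_of_ne _ _ _ _ _ h, zero_apply]

theorem IsSupportedOnInl.mul_single_inr_eq_zero (hρ : ρ.IsSupportedOnInl) (j : n) (b : m ⊕ n)
    (c : α) : ρ * single (Sum.inr j) b c = 0 := by
  ext a b'
  by_cases h : b' = b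
  · rw [h, mul_single_apply_same, (hρ j a).2, zero_mul, zero_apply]
  · rw [mul_single_apply_of_ne _ _ _ _ _ h, zero_apply]

end SumIndex

theorem PosSemidef.isSupportedOnInl_of_diag_inr_eq_zero {m n 𝕜 : Type*} [Fintype m] [Fintype n]
    [DecidableEq m] [DecidableEq n] [RCLike 𝕜] {ρ : Matrix (m ⊕ n) (m ⊕ n) 𝕜}
    (hρ : ρ.PosSemidef) (h : ∀ j, ρ (Sum.inr j) (Sum.inr j) = 0) : ρ.IsSupportedOnInl :=
  fun j b => (hρ.apply_eq_zero_of_diag_eq_zero (h j) b).symm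

end Matrix

section GroundExcited

variable {Ng Ne : ℕ}

theorem eq_Pg_mul_mul_Pg_iff {ρ : Matrix (Fin Ng ⊕ Fin Ne) (Fin Ng ⊕ Fin Ne) ℂ} :
    ρ = Pg Ng Ne * ρ * Pg Ng Ne ↔ ρ.IsSupportedOnInl := by
  have hPρP : ∀ a b, (Pg Ng Ne * ρ * Pg Ng Ne) a b
      = Sum.elim (fun _ => 1) (fun _ => 0) a * ρ a b * Sum.elim (fun _ => 1) (fun _ => 0) b :=
    fun a b => by simp [Pg, mul_diagonal, diagonal_mul]
  refine ⟨fun h j b => ⟨?_, ?_⟩, fun h => ?_⟩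
  · rw [h, hPρP]; simp
  · rw [h, hPρP]; simp
  · ext (a | a) (b | b) <;> simp [hPρP, (h _ _).1, (h _ _).2]

theorem jump_conjTranspose_mul_jump (i : Fin Ng) (j : Fin Ne) :
    (jump Ng Ne i j)ᴴ * jump Ng Ne i j = single (Sum.inr j) (Sum.inr j) 1 := by
  rw [jump, conjTranspose_single, single_mul_single_same, star_one, one_mul]

theorem Gam_eq_diagonal (γ : Fin Ng → Fin Ne → ℝ) :
    Gam Ng Ne γ = diagonal (Sum.elim 0 fun j => ((∑ i, γ i j : ℝ) : ℂ)) := by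
  ext a b
  simp only [Gam, jump_conjTranspose_mul_jump]
  rcases a with a | a <;> rcases b with b | b <;>
    simp [Matrix.sum_apply, single_apply, diagonal_apply, ite_and, eq_comm]

theorem Gam_conjTranspose (γ : Fin Ng → Fin Ne → ℝ) : (Gam Ng Ne γ)ᴴ = Gam Ng Ne γ := by
  rw [Gam_eq_diagonal, diagonal_conjTranspose]
  congr 1
  ext (a | a) <;> simp

noncomputable def effectiveHamiltonian (Ng Ne : ℕ)
    (H : Matrix (Fin Ng ⊕ Fin Ne) (Fin Ng ⊕ Fin Ne) ℂ) (γ : Fin Ng → Fin Ne → ℝ) :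
    Matrix (Fin Ng ⊕ Fin Ne) (Fin Ng ⊕ Fin Ne) ℂ :=
  H - Complex.I • Gam Ng Ne γ

variable {H : Matrix (Fin Ng ⊕ Fin Ne) (Fin Ng ⊕ Fin Ne) ℂ} {γ : Fin Ng → Fin Ne → ℝ}
  {ρ : Matrix (Fin Ng ⊕ Fin Ne) (Fin Ng ⊕ Fin Ne) ℂ}

theorem effectiveHamiltonian_mul_sub_mul_conjTranspose (hH : H.IsHermitian) :
    effectiveHamiltonian Ng Ne H γ * ρ - ρ * (effectiveHamiltonian Ng Ne H γ)ᴴ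
      = (H * ρ - ρ * H) - Complex.I • (Gam Ng Ne γ * ρ + ρ * Gam Ng Ne γ) := by
  rw [effectiveHamiltonian, conjTranspose_sub, conjTranspose_smul, Gam_conjTranspose, hH.eq,
    Complex.star_def, Complex.conj_I, sub_mul, mul_sub, Matrix.smul_mul, Matrix.mul_smul, neg_smul,
    smul_add]
  abel

theorem trace_effectiveHamiltonian_mul_sub_mul_conjTranspose (hH : H.IsHermitian) :
    (effectiveHamiltonian Ng Ne H γ * ρ - ρ * (effectiveHamiltonian Ng Ne H γ)ᴴ).trace
      = -(2 * Complex.I) * (Gam Ng Ne γ * ρ).trace := by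
  rw [effectiveHamiltonian_mul_sub_mul_conjTranspose hH, trace_sub, trace_sub, trace_smul,
    trace_add, trace_mul_comm ρ H, trace_mul_comm ρ, sub_self, smul_eq_mul]
  ring

theorem effectiveHamiltonian_mul_sub_mul_conjTranspose_of_isSupportedOnInl
    (hH : H.IsHermitian) (hρ : ρ.IsSupportedOnInl) :
    effectiveHamiltonian Ng Ne H γ * ρ - ρ * (effectiveHamiltonian Ng Ne H γ)ᴴ
      = H * ρ - ρ * H := by
  have hd : ∀ i, Sum.elim (0 : Fin Ng → ℂ) (fun j => ((∑ i, γ i j : ℝ) : ℂ)) (Sum.inl i) = 0 :=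
    fun _ => rfl
  rw [effectiveHamiltonian_mul_sub_mul_conjTranspose hH, Gam_eq_diagonal,
    hρ.diagonal_mul_eq_zero hd, hρ.mul_diagonal_eq_zero hd, add_zero, smul_zero, sub_zero]

theorem lindblad_eq_of_isSupportedOnInl (hρ : ρ.IsSupportedOnInl) :
    Lindblad Ng Ne H γ ρ = (-Complex.I) • (H * ρ - ρ * H) := by
  have hdissipator : ∀ i j, jump Ng Ne i j * ρ * (jump Ng Ne i j)ᴴ -
      (1 / 2 : ℂ) • ((jump Ng Ne i j)ᴴ * jump Ng Ne i j * ρ +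
        ρ * ((jump Ng Ne i j)ᴴ * jump Ng Ne i j)) = 0 := fun i j => by
    rw [jump_conjTranspose_mul_jump, jump, hρ.single_inr_mul_eq_zero, hρ.single_inr_mul_eq_zero,
      hρ.mul_single_inr_eq_zero]
    simp
  simp only [Lindblad, hdissipator, smul_zero, Finset.sum_const_zero, add_zero]

end GroundExcited

theorem dark_state_iff_nonhermitian_kernel_general
    (Ng Ne : ℕ)
    (H : Matrix (Fin Ng ⊕ Fin Ne) (Fin Ng ⊕ Fin Ne) ℂ) (hH : H.IsHermitian)
    (γ : Fin Ng → Fin Ne → ℝ)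
    (hγpos : ∀ j, 0 < ∑ i, γ i j)
    (ρ : Matrix (Fin Ng ⊕ Fin Ne) (Fin Ng ⊕ Fin Ne) ℂ)
    (hρ : ρ.PosSemidef) :
    (Lindblad Ng Ne H γ ρ = 0 ∧ ρ = Pg Ng Ne * ρ * Pg Ng Ne) ↔
      (H - Complex.I • Gam Ng Ne γ) * ρ - ρ * (H - Complex.I • Gam Ng Ne γ)ᴴ = 0 := by
  change _ ↔ effectiveHamiltonian Ng Ne H γ * ρ - ρ * (effectiveHamiltonian Ng Ne H γ)ᴴ = 0
  rw [eq_Pg_mul_mul_Pg_iff]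
  constructor
  · rintro ⟨hL, hsupp⟩
    rw [lindblad_eq_of_isSupportedOnInl hsupp, smul_eq_zero] at hL
    rw [effectiveHamiltonian_mul_sub_mul_conjTranspose_of_isSupportedOnInl hH hsupp]
    exact hL.resolve_left (neg_ne_zero.mpr Complex.I_ne_zero)
  · intro h
    have htr : (Gam Ng Ne γ * ρ).trace = 0 := by
      have := trace_effectiveHamiltonian_mul_sub_mul_conjTranspose (ρ := ρ) (γ := γ) hH
      simpa [h, Complex.I_ne_zero] using this.symm
    rw [Gam_eq_diagonal] at htr
    have hsupp : ρ.IsSupportedOnInl := hρ.isSupportedOnInl_of_diag_inr_eq_zero fun j =>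
      hρ.diag_eq_zero_of_trace_diagonal_mul_eq_zero
        (Sum.forall.mpr ⟨fun _ => le_rfl, fun j => Complex.zero_le_real.mpr (hγpos j).le⟩) htr
        (Complex.zero_lt_real.mpr (hγpos j))
    refine ⟨?_, hsupp⟩
    rw [lindblad_eq_of_isSupportedOnInl hsupp,
      ← effectiveHamiltonian_mul_sub_mul_conjTranspose_of_isSupportedOnInl hH hsupp, h, smul_zero]

theorem dark_state_iff_nonhermitian_kernel
    (Ng Ne : ℕ) (hNg : 1 ≤ Ng) (hNe : 1 ≤ Ne)
    (H : Matrix (Fin Ng ⊕ Fin Ne) (Fin Ng ⊕ Fin Ne) ℂ) (hH : H.IsHermitian)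
    (γ : Fin Ng → Fin Ne → ℝ) (hγ : ∀ i j, 0 ≤ γ i j)
    (hγpos : ∀ j, 0 < ∑ i, γ i j)
    (ρ : Matrix (Fin Ng ⊕ Fin Ne) (Fin Ng ⊕ Fin Ne) ℂ)
    (hρ : ρ.PosSemidef) (htr : ρ.trace = 1) :
    (Lindblad Ng Ne H γ ρ = 0 ∧ ρ = Pg Ng Ne * ρ * Pg Ng Ne) ↔
      (H - Complex.I • Gam Ng Ne γ) * ρ - ρ * (H - Complex.I • Gam Ng Ne γ)ᴴ = 0 :=
  dark_state_iff_nonhermitian_kernel_general Ng Ne H hH γ hγpos ρ hρ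
end

section
/- If ρ is supported on the ground subspace, ρ = P ρ P, then every dissipative term vanishes on ρ: Σ_{i,j} γ i j ((σ i j) ρ (σ i j)ᴴ − (1/2)((σ i j)ᴴ(σ i j)ρ + ρ(σ i j)ᴴ(σ i j))) = 0, Γρ = 0 and ρΓ = 0; consequently L(ρ) = −i(Hρ − ρH) = −i(H̃ρ − ρH̃ᴴ). -/
open Matrix Complex BigOperators ComplexOrder

/-- Projection onto the excited-state indices. -/
noncomputable def Qe (Ng Ne : ℕ) : Matrix (Fin Ng ⊕ Fin Ne) (Fin Ng ⊕ Fin Ne) ℂ :=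
  1 - Pg Ng Ne

/-- A dark state: a density matrix annihilated by the Lindbladian and supported on the
ground-state subspace. -/
def IsDarkState (Ng Ne : ℕ) (H : Matrix (Fin Ng ⊕ Fin Ne) (Fin Ng ⊕ Fin Ne) ℂ)
    (γ : Fin Ng → Fin Ne → ℝ) (ρ : Matrix (Fin Ng ⊕ Fin Ne) (Fin Ng ⊕ Fin Ne) ℂ) : Prop :=
  ρ.PosSemidef ∧ ρ.trace = 1 ∧ Lindblad Ng Ne H γ ρ = 0 ∧ ρ = Pg Ng Ne * ρ * Pg Ng Ne

/-! Every jump operator `σ i j = |g_i⟩⟨e_j|` is annihilated by the ground projection `P` on the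
right, `σ P = 0`, and hence, taking adjoints, `P σᴴ = 0`. A state with `ρ = P ρ P` therefore
satisfies `σ ρ = 0` and `ρ σᴴ = 0`, which kills every term of the dissipator and both `Γ ρ` and
`ρ Γ`. Since `Γ` is Hermitian, `H̃ᴴ = H + iΓ`, and the `Γ`-terms of `H̃ ρ - ρ H̃ᴴ` drop out. -/

noncomputable def dissipator (Ng Ne : ℕ) (γ : Fin Ng → Fin Ne → ℝ)
    (ρ : Matrix (Fin Ng ⊕ Fin Ne) (Fin Ng ⊕ Fin Ne) ℂ) :
    Matrix (Fin Ng ⊕ Fin Ne) (Fin Ng ⊕ Fin Ne) ℂ :=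
  ∑ i, ∑ j, (γ i j : ℂ) •
    (jump Ng Ne i j * ρ * (jump Ng Ne i j)ᴴ -
      (1 / 2 : ℂ) • ((jump Ng Ne i j)ᴴ * jump Ng Ne i j * ρ +
        ρ * ((jump Ng Ne i j)ᴴ * jump Ng Ne i j)))

theorem Lindblad_eq_commutator_add_dissipator (Ng Ne : ℕ)
    (H : Matrix (Fin Ng ⊕ Fin Ne) (Fin Ng ⊕ Fin Ne) ℂ) (γ : Fin Ng → Fin Ne → ℝ)
    (ρ : Matrix (Fin Ng ⊕ Fin Ne) (Fin Ng ⊕ Fin Ne) ℂ) :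
    Lindblad Ng Ne H γ ρ = (-Complex.I) • (H * ρ - ρ * H) + dissipator Ng Ne γ ρ :=
  rfl

theorem Pg_isHermitian (Ng Ne : ℕ) : (Pg Ng Ne).IsHermitian :=
  isHermitian_diagonal_iff.2 fun a => by cases a <;> simp

theorem Gam_isHermitian (Ng Ne : ℕ) (γ : Fin Ng → Fin Ne → ℝ) : (Gam Ng Ne γ).IsHermitian :=
  isSelfAdjoint_sum _ fun i _ => isSelfAdjoint_sum _ fun j _ =>
    (isHermitian_conjTranspose_mul_self _).smul (Complex.conj_ofReal (γ i j))

theorem jump_mul_Pg (Ng Ne : ℕ) (i : Fin Ng) (j : Fin Ne) :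
    jump Ng Ne i j * Pg Ng Ne = 0 := by
  ext a b
  rcases b with b | b <;> simp [jump, Pg, Matrix.single]

theorem Pg_mul_conjTranspose_jump (Ng Ne : ℕ) (i : Fin Ng) (j : Fin Ne) :
    Pg Ng Ne * (jump Ng Ne i j)ᴴ = 0 := by
  rw [← (Pg_isHermitian Ng Ne).eq, ← conjTranspose_mul, jump_mul_Pg, conjTranspose_zero]

section GroundSupported

variable {Ng Ne : ℕ} {ρ : Matrix (Fin Ng ⊕ Fin Ne) (Fin Ng ⊕ Fin Ne) ℂ}

theorem jump_mul_eq_zero_of_ground_supported (hρ : ρ = Pg Ng Ne * ρ * Pg Ng Ne)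
    (i : Fin Ng) (j : Fin Ne) : jump Ng Ne i j * ρ = 0 := by
  rw [hρ, ← mul_assoc, ← mul_assoc, jump_mul_Pg, zero_mul, zero_mul]

theorem mul_conjTranspose_jump_eq_zero_of_ground_supported (hρ : ρ = Pg Ng Ne * ρ * Pg Ng Ne)
    (i : Fin Ng) (j : Fin Ne) : ρ * (jump Ng Ne i j)ᴴ = 0 := by
  rw [hρ, mul_assoc, Pg_mul_conjTranspose_jump, mul_zero]

theorem dissipator_eq_zero_of_ground_supported (γ : Fin Ng → Fin Ne → ℝ)
    (hρ : ρ = Pg Ng Ne * ρ * Pg Ng Ne) : dissipator Ng Ne γ ρ = 0 := by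
  refine Finset.sum_eq_zero fun i _ => Finset.sum_eq_zero fun j _ => ?_
  rw [← mul_assoc, mul_assoc _ _ ρ, jump_mul_eq_zero_of_ground_supported hρ,
    mul_conjTranspose_jump_eq_zero_of_ground_supported hρ]
  simp

theorem Gam_mul_eq_zero_of_ground_supported (γ : Fin Ng → Fin Ne → ℝ)
    (hρ : ρ = Pg Ng Ne * ρ * Pg Ng Ne) : Gam Ng Ne γ * ρ = 0 := by
  simp only [Gam, Finset.sum_mul, smul_mul_assoc, mul_assoc,
    jump_mul_eq_zero_of_ground_supported hρ, mul_zero, smul_zero, Finset.sum_const_zero]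

theorem mul_Gam_eq_zero_of_ground_supported (γ : Fin Ng → Fin Ne → ℝ)
    (hρ : ρ = Pg Ng Ne * ρ * Pg Ng Ne) : ρ * Gam Ng Ne γ = 0 := by
  simp only [Gam, Finset.mul_sum, mul_smul_comm, ← mul_assoc,
    mul_conjTranspose_jump_eq_zero_of_ground_supported hρ, zero_mul, smul_zero,
    Finset.sum_const_zero]

end GroundSupported

theorem dissipator_vanishes_on_ground_supported_general
    (Ng Ne : ℕ)
    (H : Matrix (Fin Ng ⊕ Fin Ne) (Fin Ng ⊕ Fin Ne) ℂ) (hH : H.IsHermitian)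
    (γ : Fin Ng → Fin Ne → ℝ)
    (ρ : Matrix (Fin Ng ⊕ Fin Ne) (Fin Ng ⊕ Fin Ne) ℂ)
    (hsupp : ρ = Pg Ng Ne * ρ * Pg Ng Ne) :
    (∑ i, ∑ j, (γ i j : ℂ) •
      (jump Ng Ne i j * ρ * (jump Ng Ne i j)ᴴ -
        (1 / 2 : ℂ) • ((jump Ng Ne i j)ᴴ * jump Ng Ne i j * ρ +
          ρ * ((jump Ng Ne i j)ᴴ * jump Ng Ne i j))) = 0) ∧
    Gam Ng Ne γ * ρ = 0 ∧ ρ * Gam Ng Ne γ = 0 ∧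
    Lindblad Ng Ne H γ ρ = (-Complex.I) • (H * ρ - ρ * H) ∧
    Lindblad Ng Ne H γ ρ =
      (-Complex.I) • ((H - Complex.I • Gam Ng Ne γ) * ρ -
        ρ * (H - Complex.I • Gam Ng Ne γ)ᴴ) := by
  have hD := dissipator_eq_zero_of_ground_supported γ hsupp
  have hΓρ := Gam_mul_eq_zero_of_ground_supported γ hsupp
  have hρΓ := mul_Gam_eq_zero_of_ground_supported γ hsupp
  have hL : Lindblad Ng Ne H γ ρ = (-Complex.I) • (H * ρ - ρ * H) := by
    rw [Lindblad_eq_commutator_add_dissipator, hD, add_zero]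
  have hconj : (H - Complex.I • Gam Ng Ne γ)ᴴ = H + Complex.I • Gam Ng Ne γ := by
    rw [conjTranspose_sub, conjTranspose_smul, (Gam_isHermitian Ng Ne γ).eq, hH.eq,
      Complex.star_def, Complex.conj_I, neg_smul, sub_neg_eq_add]
  refine ⟨hD, hΓρ, hρΓ, hL, ?_⟩
  rw [hL, hconj, sub_mul, mul_add, smul_mul_assoc, mul_smul_comm, hΓρ, hρΓ, smul_zero, sub_zero,
    add_zero]

theorem dissipator_vanishes_on_ground_supported
    (Ng Ne : ℕ) (hNg : 1 ≤ Ng) (hNe : 1 ≤ Ne)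
    (H : Matrix (Fin Ng ⊕ Fin Ne) (Fin Ng ⊕ Fin Ne) ℂ) (hH : H.IsHermitian)
    (γ : Fin Ng → Fin Ne → ℝ) (hγ : ∀ i j, 0 ≤ γ i j)
    (ρ : Matrix (Fin Ng ⊕ Fin Ne) (Fin Ng ⊕ Fin Ne) ℂ)
    (hsupp : ρ = Pg Ng Ne * ρ * Pg Ng Ne) :
    (∑ i, ∑ j, (γ i j : ℂ) •
      (jump Ng Ne i j * ρ * (jump Ng Ne i j)ᴴ -
        (1 / 2 : ℂ) • ((jump Ng Ne i j)ᴴ * jump Ng Ne i j * ρ +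
          ρ * ((jump Ng Ne i j)ᴴ * jump Ng Ne i j))) = 0) ∧
    Gam Ng Ne γ * ρ = 0 ∧ ρ * Gam Ng Ne γ = 0 ∧
    Lindblad Ng Ne H γ ρ = (-Complex.I) • (H * ρ - ρ * H) ∧
    Lindblad Ng Ne H γ ρ =
      (-Complex.I) • ((H - Complex.I • Gam Ng Ne γ) * ρ -
        ρ * (H - Complex.I • Gam Ng Ne γ)ᴴ) :=
  dissipator_vanishes_on_ground_supported_general Ng Ne H hH γ ρ hsupp
end

section
/- Let ρ be a Hermitian matrix supported on the ground subspace, ρ = P ρ P, and let Γ be a Hermitian matrix supported on the excited subspace, Γ = Q Γ Q. Then H̃ρ − ρH̃ᴴ = 0 (with H̃ = H − i·Γ) if and only if both (PHP)ρ − ρ(PHP) = 0 and Q H P ρ = 0. -/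
open Matrix Complex BigOperators ComplexOrder

/-!
Since `Γ` lives on the excited block and `ρ` on the ground block, `Γ ρ = ρ Γᴴ = 0`, so the
condition is just `[H, ρ] = 0`. Splitting `1 = P + Q` on the left of `H ρ = H P ρ` gives
`H ρ = (P H P) ρ + (Q H P) ρ`, and on the right `ρ H = ρ (P H P) + ρ H Q`, where
`ρ H Q = (Q H ρ)ᴴ` because `H` and `ρ` are Hermitian.
-/

namespace IsIdempotentElem

variable {A : Type*} [Ring A] {p a b : A}

theorem mul_eq_of_eq_mul_mul (hp : IsIdempotentElem p) (ha : a = p * a * p) : p * a = a := by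
  rw [ha, ← mul_assoc, ← mul_assoc, hp.eq]

theorem mul_eq_of_eq_mul_mul' (hp : IsIdempotentElem p) (ha : a = p * a * p) : a * p = a := by
  rw [ha, mul_assoc, hp.eq]

theorem one_sub_mul_eq_zero_of_eq_mul_mul (hp : IsIdempotentElem p) (ha : a = p * a * p) :
    (1 - p) * a = 0 := by
  rw [← hp.mul_eq_of_eq_mul_mul ha, ← mul_assoc, hp.one_sub_mul_self, zero_mul]

theorem mul_one_sub_eq_zero_of_eq_mul_mul (hp : IsIdempotentElem p) (ha : a = p * a * p) :
    a * (1 - p) = 0 := by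
  rw [← hp.mul_eq_of_eq_mul_mul' ha, mul_assoc, hp.mul_one_sub_self, mul_zero]

theorem mul_eq_zero_of_eq_one_sub_mul_mul (hp : IsIdempotentElem p)
    (ha : a = (1 - p) * a * (1 - p)) (hb : b = p * b * p) : a * b = 0 := by
  rw [ha, mul_assoc, hp.one_sub_mul_eq_zero_of_eq_mul_mul hb, mul_zero]

theorem mul_eq_zero_of_eq_one_sub_mul_mul' (hp : IsIdempotentElem p)
    (ha : a = (1 - p) * a * (1 - p)) (hb : b = p * b * p) : b * a = 0 := by
  rw [ha, ← mul_assoc, ← mul_assoc, hp.mul_one_sub_eq_zero_of_eq_mul_mul hb, zero_mul, zero_mul]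

end IsIdempotentElem

section StarRing

variable {A : Type*} [Ring A] [StarRing A]

theorem IsSelfAdjoint.star_eq_mul_mul {q a : A} (hq : IsSelfAdjoint q) (ha : a = q * a * q) :
    star a = q * star a * q := by
  conv_lhs => rw [ha]
  rw [star_mul, star_mul, hq.star_eq, mul_assoc]

theorem sub_smul_mul_sub_mul_star_sub_smul {R : Type*} [CommSemiring R] [StarRing R]
    [Algebra R A] [StarModule R A] (c : R) {h g ρ : A} (hgρ : g * ρ = 0)
    (hρg : ρ * star g = 0) :
    (h - c • g) * ρ - ρ * star (h - c • g) = h * ρ - ρ * star h := by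
  rw [star_sub, star_smul, sub_mul, mul_sub, smul_mul_assoc, mul_smul_comm, hgρ, hρg,
    smul_zero, smul_zero, sub_zero, sub_zero]

theorem commutator_eq_zero_iff_of_eq_mul_mul {p h ρ : A} (hp : IsIdempotentElem p)
    (hpsa : IsSelfAdjoint p) (hh : IsSelfAdjoint h) (hρsa : IsSelfAdjoint ρ)
    (hρ : ρ = p * ρ * p) :
    h * ρ - ρ * h = 0 ↔
      (p * h * p) * ρ - ρ * (p * h * p) = 0 ∧ (1 - p) * h * p * ρ = 0 := by
  have hpρ := hp.mul_eq_of_eq_mul_mul hρ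
  have hρp := hp.mul_eq_of_eq_mul_mul' hρ
  have hqρ := hp.one_sub_mul_eq_zero_of_eq_mul_mul hρ
  rw [mul_assoc _ p ρ, mul_assoc _ p ρ, hpρ, ← mul_assoc ρ, ← mul_assoc ρ, hρp, sub_eq_zero,
    sub_eq_zero]
  constructor
  · intro hc
    refine ⟨?_, ?_⟩
    · rw [mul_assoc, hc, ← mul_assoc, hpρ, ← hc, mul_assoc, hρp]
    · rw [mul_assoc, hc, ← mul_assoc, hqρ, zero_mul]
  · rintro ⟨hPHP, hQHP⟩
    have hρHQ : ρ * h * (1 - p) = 0 := by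
      simpa [star_mul, hpsa.star_eq, hh.star_eq, hρsa.star_eq, mul_assoc] using
        congrArg star hQHP
    calc h * ρ = p * h * ρ + (1 - p) * h * ρ := by noncomm_ring
      _ = ρ * h * p + ρ * h * (1 - p) := by rw [hPHP, hQHP, hρHQ]
      _ = ρ * h := by noncomm_ring

end StarRing

theorem isIdempotentElem_Pg (Ng Ne : ℕ) : IsIdempotentElem (Pg Ng Ne) := by
  rw [IsIdempotentElem, Pg, diagonal_mul_diagonal]
  congr 1
  ext (i | j) <;> simp

theorem isSelfAdjoint_Pg (Ng Ne : ℕ) : IsSelfAdjoint (Pg Ng Ne) :=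
  isHermitian_diagonal_of_self_adjoint _ (by ext (i | j) <;> simp)

theorem nonhermitian_kernel_iff_projected_conditions_general
    (Ng Ne : ℕ)
    (H : Matrix (Fin Ng ⊕ Fin Ne) (Fin Ng ⊕ Fin Ne) ℂ) (hH : H.IsHermitian)
    (Γ : Matrix (Fin Ng ⊕ Fin Ne) (Fin Ng ⊕ Fin Ne) ℂ)
    (hΓsupp : Γ = Qe Ng Ne * Γ * Qe Ng Ne)
    (ρ : Matrix (Fin Ng ⊕ Fin Ne) (Fin Ng ⊕ Fin Ne) ℂ) (hρ : ρ.IsHermitian)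
    (hsupp : ρ = Pg Ng Ne * ρ * Pg Ng Ne) :
    (H - Complex.I • Γ) * ρ - ρ * (H - Complex.I • Γ)ᴴ = 0 ↔
      ((Pg Ng Ne * H * Pg Ng Ne) * ρ - ρ * (Pg Ng Ne * H * Pg Ng Ne) = 0 ∧
        Qe Ng Ne * H * Pg Ng Ne * ρ = 0) := by
  have hP := isIdempotentElem_Pg Ng Ne
  have hQ : IsSelfAdjoint (Qe Ng Ne) := (IsSelfAdjoint.one _).sub (isSelfAdjoint_Pg Ng Ne)
  have hΓρ : Γ * ρ = 0 := hP.mul_eq_zero_of_eq_one_sub_mul_mul hΓsupp hsupp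
  have hρΓ : ρ * star Γ = 0 :=
    hP.mul_eq_zero_of_eq_one_sub_mul_mul' (hQ.star_eq_mul_mul hΓsupp) hsupp
  rw [← star_eq_conjTranspose, sub_smul_mul_sub_mul_star_sub_smul _ hΓρ hρΓ, hH.star_eq]
  exact commutator_eq_zero_iff_of_eq_mul_mul hP (isSelfAdjoint_Pg Ng Ne) hH hρ hsupp

theorem nonhermitian_kernel_iff_projected_conditions
    (Ng Ne : ℕ)
    (H : Matrix (Fin Ng ⊕ Fin Ne) (Fin Ng ⊕ Fin Ne) ℂ) (hH : H.IsHermitian)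
    (Γ : Matrix (Fin Ng ⊕ Fin Ne) (Fin Ng ⊕ Fin Ne) ℂ) (hΓ : Γ.IsHermitian)
    (hΓsupp : Γ = Qe Ng Ne * Γ * Qe Ng Ne)
    (ρ : Matrix (Fin Ng ⊕ Fin Ne) (Fin Ng ⊕ Fin Ne) ℂ) (hρ : ρ.IsHermitian)
    (hsupp : ρ = Pg Ng Ne * ρ * Pg Ng Ne) :
    (H - Complex.I • Γ) * ρ - ρ * (H - Complex.I • Γ)ᴴ = 0 ↔
      ((Pg Ng Ne * H * Pg Ng Ne) * ρ - ρ * (Pg Ng Ne * H * Pg Ng Ne) = 0 ∧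
        Qe Ng Ne * H * Pg Ng Ne * ρ = 0) :=
  nonhermitian_kernel_iff_projected_conditions_general Ng Ne H hH Γ hΓsupp ρ hρ hsupp
end

section
/- A density matrix ρ is a dark state, i.e. L(ρ) = 0 and ρ = PρP, if and only if the following three conditions hold: ρ = P ρ P, (PHP)ρ − ρ(PHP) = 0, and Q H ρ = 0. -/
open Matrix Complex BigOperators ComplexOrder

/-! If `ρ = PρP`, every jump operator `σ = |g⟩⟨e|` satisfies `σρ = 0 = ρσᴴ`, so the dissipator
vanishes and `L(ρ) = -i[H, ρ]`. Writing `H = (P + Q) H (P + Q)` gives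
`[H, ρ] = [PHP, ρ] + QHρ - ρHQ`; the last two terms are the off-diagonal blocks, and since `H` and
`ρ` are Hermitian, `ρHQ = (QHρ)ᴴ`. -/

section Corner

variable {R : Type*} [Ring R] {P H ρ : R}

theorem commutator_eq_corner_add_offDiag (hPρ : P * ρ = ρ) (hρP : ρ * P = ρ) :
    H * ρ - ρ * H =
      (P * H * P * ρ - ρ * (P * H * P)) + (1 - P) * H * ρ - ρ * H * (1 - P) := by
  simp only [mul_assoc, hPρ]
  simp only [← mul_assoc, hρP]
  noncomm_ring

theorem commutator_eq_zero_iff_of_eq_mul_mul_s6 [StarRing R] (hP : IsIdempotentElem P)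
    (hPs : IsSelfAdjoint P) (hH : IsSelfAdjoint H) (hρ : IsSelfAdjoint ρ)
    (hsupp : ρ = P * ρ * P) :
    H * ρ - ρ * H = 0 ↔ P * H * P * ρ - ρ * (P * H * P) = 0 ∧ (1 - P) * H * ρ = 0 := by
  have hPρ : P * ρ = ρ := by rw [hsupp, ← mul_assoc, ← mul_assoc, hP.eq]
  have hρP : ρ * P = ρ := by rw [hsupp, mul_assoc, hP.eq]
  constructor
  · intro h
    have hc : H * ρ = ρ * H := sub_eq_zero.mp h
    constructor
    · have hleft : P * H * P * ρ = ρ * H := by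
        rw [mul_assoc _ P, hPρ, mul_assoc, hc, ← mul_assoc, hPρ]
      have hright : ρ * (P * H * P) = H * ρ := by
        rw [← mul_assoc, ← mul_assoc, hρP, ← hc, mul_assoc, hρP]
      rw [hleft, hright, hc, sub_self]
    · rw [mul_assoc, hc, ← mul_assoc, sub_mul, one_mul, hPρ, sub_self, zero_mul]
  · rintro ⟨hcorner, hoff⟩
    have hoff' : ρ * H * (1 - P) = 0 := by
      have := congrArg star hoff
      rwa [star_mul, star_mul, hρ.star_eq, hH.star_eq, star_sub, star_one, hPs.star_eq, star_zero,
        ← mul_assoc] at this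
    rw [commutator_eq_corner_add_offDiag hPρ hρP, hcorner, hoff, hoff', zero_add, sub_zero]

end Corner

theorem Lindblad_eq_of_eq_Pg_mul_mul {Ng Ne : ℕ}
    (H : Matrix (Fin Ng ⊕ Fin Ne) (Fin Ng ⊕ Fin Ne) ℂ) (γ : Fin Ng → Fin Ne → ℝ)
    {ρ : Matrix (Fin Ng ⊕ Fin Ne) (Fin Ng ⊕ Fin Ne) ℂ} (hsupp : ρ = Pg Ng Ne * ρ * Pg Ng Ne) :
    Lindblad Ng Ne H γ ρ = (-Complex.I) • (H * ρ - ρ * H) := by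
  have hjρ : ∀ i j, jump Ng Ne i j * ρ = 0 := fun i j => by
    rw [hsupp, ← Matrix.mul_assoc, ← Matrix.mul_assoc, jump_mul_Pg, Matrix.zero_mul,
      Matrix.zero_mul]
  have hρj : ∀ i j, ρ * (jump Ng Ne i j)ᴴ = 0 := fun i j => by
    rw [hsupp, Matrix.mul_assoc, Pg_mul_conjTranspose_jump, Matrix.mul_zero]
  rw [Lindblad, add_eq_left]
  refine Finset.sum_eq_zero fun i _ => Finset.sum_eq_zero fun j _ => ?_
  rw [hjρ, Matrix.mul_assoc, hjρ, ← Matrix.mul_assoc ρ, hρj]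
  simp

theorem dark_state_iff_commutes_and_QH_annihilates_general
    (Ng Ne : ℕ)
    (H : Matrix (Fin Ng ⊕ Fin Ne) (Fin Ng ⊕ Fin Ne) ℂ) (hH : H.IsHermitian)
    (γ : Fin Ng → Fin Ne → ℝ)
    (ρ : Matrix (Fin Ng ⊕ Fin Ne) (Fin Ng ⊕ Fin Ne) ℂ)
    (hρ : ρ.PosSemidef) :
    (Lindblad Ng Ne H γ ρ = 0 ∧ ρ = Pg Ng Ne * ρ * Pg Ng Ne) ↔
      (ρ = Pg Ng Ne * ρ * Pg Ng Ne ∧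
        (Pg Ng Ne * H * Pg Ng Ne) * ρ - ρ * (Pg Ng Ne * H * Pg Ng Ne) = 0 ∧
        Qe Ng Ne * H * ρ = 0) := by
  have hLindblad_iff (hsupp : ρ = Pg Ng Ne * ρ * Pg Ng Ne) :
      Lindblad Ng Ne H γ ρ = 0 ↔
        (Pg Ng Ne * H * Pg Ng Ne) * ρ - ρ * (Pg Ng Ne * H * Pg Ng Ne) = 0 ∧
          Qe Ng Ne * H * ρ = 0 := by
    rw [Lindblad_eq_of_eq_Pg_mul_mul H γ hsupp, smul_eq_zero, neg_eq_zero,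
      or_iff_right Complex.I_ne_zero]
    exact commutator_eq_zero_iff_of_eq_mul_mul_s6 (isIdempotentElem_Pg Ng Ne)
      (isSelfAdjoint_Pg Ng Ne) hH.isSelfAdjoint hρ.1.isSelfAdjoint hsupp
  exact ⟨fun ⟨hL, hsupp⟩ => ⟨hsupp, (hLindblad_iff hsupp).1 hL⟩,
    fun ⟨hsupp, h⟩ => ⟨(hLindblad_iff hsupp).2 h, hsupp⟩⟩

theorem dark_state_iff_commutes_and_QH_annihilates
    (Ng Ne : ℕ) (hNg : 1 ≤ Ng) (hNe : 1 ≤ Ne)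
    (H : Matrix (Fin Ng ⊕ Fin Ne) (Fin Ng ⊕ Fin Ne) ℂ) (hH : H.IsHermitian)
    (γ : Fin Ng → Fin Ne → ℝ) (hγ : ∀ i j, 0 ≤ γ i j)
    (hγpos : ∀ j, 0 < ∑ i, γ i j)
    (ρ : Matrix (Fin Ng ⊕ Fin Ne) (Fin Ng ⊕ Fin Ne) ℂ)
    (hρ : ρ.PosSemidef) (htr : ρ.trace = 1) :
    (Lindblad Ng Ne H γ ρ = 0 ∧ ρ = Pg Ng Ne * ρ * Pg Ng Ne) ↔
      (ρ = Pg Ng Ne * ρ * Pg Ng Ne ∧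
        (Pg Ng Ne * H * Pg Ng Ne) * ρ - ρ * (Pg Ng Ne * H * Pg Ng Ne) = 0 ∧
        Qe Ng Ne * H * ρ = 0) :=
  dark_state_iff_commutes_and_QH_annihilates_general Ng Ne H hH γ ρ hρ
end

section
/- (Case 1: the number of excited states does not constrain the couplings.) Let P_s be a Hermitian projection matrix with P P_s = P_s, P H P · P_s = 𝓔_s · P_s for some real number 𝓔_s, and rank(P_s) ≥ Ne + 1. Then, regardless of the values of the couplings (the off-diagonal blocks of H), there exists a unit vector ψ with P_s ψ = ψ and Q H ψ = 0, and ψψᴴ is a dark state: L(ψψᴴ) = 0 and ψψᴴ = P(ψψᴴ)P. -/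
open Matrix Complex BigOperators ComplexOrder

/-! Since `Q` has rank `Ne < rank P_s`, the map `ψ ↦ QHψ` is not injective on the range of `P_s`;
normalise a nonzero vector `ψ` of its kernel there. Such a `ψ` lies in the ground space, so every
jump operator annihilates it and the dissipator vanishes on `ψψᴴ`; and `QHψ = 0` together with
`PHP P_s = 𝓔 P_s` makes `ψ` an eigenvector of `H` with real eigenvalue `𝓔`, so `ψψᴴ` commutes
with `H`. -/

open Module in
theorem Matrix.exists_ne_zero_mulVec_eq_zero_of_rank_lt {m n K : Type*} [Fintype m] [Fintype n]
    [Field K] (A : Matrix m n K) (S : Submodule K (n → K)) (h : A.rank < finrank K S) :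
    ∃ v ∈ S, v ≠ 0 ∧ A *ᵥ v = 0 := by
  set f := A.mulVecLin ∘ₗ S.subtype
  have hf : ¬ Function.Injective f := fun hinj =>
    h.not_ge <| (LinearMap.finrank_range_of_inj hinj).symm.trans_le <|
      Submodule.finrank_mono (LinearMap.range_comp_le_range _ _)
  obtain ⟨⟨v, hvS⟩, hfv, hv⟩ : ∃ v, f v = 0 ∧ v ≠ 0 := by
    simpa [injective_iff_map_eq_zero] using hf
  exact ⟨v, hvS, by simpa using hv, hfv⟩

theorem Matrix.mulVec_eq_self_of_mem_range {n R : Type*} [Fintype n] [CommSemiring R]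
    {P : Matrix n n R} (hP : P * P = P) {v : n → R} (hv : v ∈ LinearMap.range P.mulVecLin) :
    P *ᵥ v = v := by
  obtain ⟨w, rfl⟩ := hv
  rw [mulVecLin_apply, mulVec_mulVec, hP]

theorem exists_smul_star_dotProduct_self_eq_one {n : Type*} [Fintype n] {v : n → ℂ}
    (hv : v ≠ 0) : ∃ c : ℂ, star (c • v) ⬝ᵥ (c • v) = 1 := by
  obtain ⟨hre, him⟩ := Complex.pos_iff.mp (dotProduct_star_self_pos_iff.mpr hv)
  set r := (star v ⬝ᵥ v).re
  have hnorm : star v ⬝ᵥ v = (r : ℂ) := Complex.ext rfl him.symm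
  refine ⟨((√r)⁻¹ : ℝ), ?_⟩
  rw [star_smul, smul_dotProduct, dotProduct_smul, hnorm, Complex.star_def, Complex.conj_ofReal,
    smul_eq_mul, smul_eq_mul, ← mul_assoc, ← Complex.ofReal_mul, ← Complex.ofReal_mul, ← mul_inv,
    Real.mul_self_sqrt hre.le, inv_mul_cancel₀ hre.ne', Complex.ofReal_one]

section PureState

variable {n : Type*}

theorem conjTranspose_vecMulVec_star (ψ : n → ℂ) :
    (vecMulVec ψ (star ψ))ᴴ = vecMulVec ψ (star ψ) := by
  rw [conjTranspose_vecMulVec, star_star]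

variable [Fintype n] {ψ : n → ℂ}

theorem mul_vecMulVec_star_eq_zero {A : Matrix n n ℂ} (hA : A *ᵥ ψ = 0) :
    A * vecMulVec ψ (star ψ) = 0 := by
  rw [mul_vecMulVec, hA, zero_vecMulVec]

theorem vecMulVec_star_mul_conjTranspose_eq_zero {A : Matrix n n ℂ} (hA : A *ᵥ ψ = 0) :
    vecMulVec ψ (star ψ) * Aᴴ = 0 := by
  rw [← conjTranspose_vecMulVec_star ψ, ← conjTranspose_mul, mul_vecMulVec_star_eq_zero hA,
    conjTranspose_zero]

theorem dissipator_vecMulVec_star_eq_zero {L : Matrix n n ℂ} (hL : L *ᵥ ψ = 0) :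
    L * vecMulVec ψ (star ψ) * Lᴴ - (1 / 2 : ℂ) • (Lᴴ * L * vecMulVec ψ (star ψ) +
      vecMulVec ψ (star ψ) * (Lᴴ * L)) = 0 := by
  rw [Matrix.mul_assoc Lᴴ, ← Matrix.mul_assoc _ Lᴴ, mul_vecMulVec_star_eq_zero hL,
    vecMulVec_star_mul_conjTranspose_eq_zero hL]
  simp

theorem commutator_vecMulVec_star_eq_zero {H : Matrix n n ℂ} (hH : H.IsHermitian) {E : ℝ}
    (hψ : H *ᵥ ψ = (E : ℂ) • ψ) :
    H * vecMulVec ψ (star ψ) - vecMulVec ψ (star ψ) * H = 0 := by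
  have hHρ : H * vecMulVec ψ (star ψ) = (E : ℂ) • vecMulVec ψ (star ψ) := by
    rw [mul_vecMulVec, hψ, smul_vecMulVec]
  have hρH : vecMulVec ψ (star ψ) * H = (H * vecMulVec ψ (star ψ))ᴴ := by
    rw [conjTranspose_mul, hH.eq, conjTranspose_vecMulVec_star]
  rw [hρH, hHρ, conjTranspose_smul, conjTranspose_vecMulVec_star, Complex.star_def,
    Complex.conj_ofReal, sub_self]

theorem mul_vecMulVec_star_mul_eq_self {P : Matrix n n ℂ} (hP : Pᴴ = P) (hψ : P *ᵥ ψ = ψ) :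
    P * vecMulVec ψ (star ψ) * P = vecMulVec ψ (star ψ) := by
  have hPρ : P * vecMulVec ψ (star ψ) = vecMulVec ψ (star ψ) := by rw [mul_vecMulVec, hψ]
  rw [hPρ]
  calc vecMulVec ψ (star ψ) * P = (P * vecMulVec ψ (star ψ))ᴴ := by
        rw [conjTranspose_mul, hP, conjTranspose_vecMulVec_star]
    _ = vecMulVec ψ (star ψ) := by rw [hPρ, conjTranspose_vecMulVec_star]

end PureState

section GroundStates

variable {Ng Ne : ℕ}

theorem Pg_conjTranspose : (Pg Ng Ne)ᴴ = Pg Ng Ne := by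
  rw [Pg, diagonal_conjTranspose]
  congr 1
  ext (i | j) <;> simp

theorem Qe_eq_diagonal : Qe Ng Ne = diagonal (Sum.elim (fun _ => 0) (fun _ => 1)) := by
  rw [Qe, Pg, ← diagonal_one, diagonal_sub]
  congr 1
  ext (i | j) <;> simp

theorem rank_Qe : (Qe Ng Ne).rank = Ne := by
  classical
  rw [Qe_eq_diagonal, rank_diagonal, Fintype.card_congr Equiv.subtypeSum, Fintype.card_sum]
  simp

theorem apply_inr_eq_zero_of_Pg_mulVec_eq {ψ : Fin Ng ⊕ Fin Ne → ℂ} (hψ : Pg Ng Ne *ᵥ ψ = ψ)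
    (j : Fin Ne) : ψ (Sum.inr j) = 0 := by
  rw [← hψ, Pg, mulVec_diagonal]
  simp

theorem jump_mulVec_eq_zero_of_Pg_mulVec_eq {ψ : Fin Ng ⊕ Fin Ne → ℂ}
    (hψ : Pg Ng Ne *ᵥ ψ = ψ) (i : Fin Ng) (j : Fin Ne) : jump Ng Ne i j *ᵥ ψ = 0 := by
  rw [jump, single_mulVec, apply_inr_eq_zero_of_Pg_mulVec_eq hψ, mul_zero]
  simp

theorem mulVec_eq_smul_of_Qe_mul_mulVec_eq_zero
    {H Ps : Matrix (Fin Ng ⊕ Fin Ne) (Fin Ng ⊕ Fin Ne) ℂ} {E : ℝ}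
    (hspec : Pg Ng Ne * H * Pg Ng Ne * Ps = (E : ℂ) • Ps) {ψ : Fin Ng ⊕ Fin Ne → ℂ}
    (hPs : Ps *ᵥ ψ = ψ) (hPg : Pg Ng Ne *ᵥ ψ = ψ) (hQH : (Qe Ng Ne * H) *ᵥ ψ = 0) :
    H *ᵥ ψ = (E : ℂ) • ψ := by
  rw [Qe, Matrix.sub_mul, Matrix.one_mul, sub_mulVec, sub_eq_zero] at hQH
  calc H *ᵥ ψ = (Pg Ng Ne * H) *ᵥ (Pg Ng Ne *ᵥ (Ps *ᵥ ψ)) := by rw [hPs, hPg, hQH]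
    _ = (E : ℂ) • ψ := by rw [mulVec_mulVec, mulVec_mulVec, hspec, smul_mulVec, hPs]

theorem Lindblad_vecMulVec_star_eq_zero {H : Matrix (Fin Ng ⊕ Fin Ne) (Fin Ng ⊕ Fin Ne) ℂ}
    (hH : H.IsHermitian) (γ : Fin Ng → Fin Ne → ℝ) {E : ℝ} {ψ : Fin Ng ⊕ Fin Ne → ℂ}
    (hHψ : H *ᵥ ψ = (E : ℂ) • ψ) (hPg : Pg Ng Ne *ᵥ ψ = ψ) :
    Lindblad Ng Ne H γ (vecMulVec ψ (star ψ)) = 0 := by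
  rw [Lindblad, commutator_vecMulVec_star_eq_zero hH hHψ, smul_zero, zero_add]
  refine Finset.sum_eq_zero fun i _ => Finset.sum_eq_zero fun j _ => ?_
  rw [dissipator_vecMulVec_star_eq_zero (jump_mulVec_eq_zero_of_Pg_mulVec_eq hPg i j), smul_zero]

end GroundStates

theorem dark_state_exists_of_large_degenerate_subspace_general
    (Ng Ne : ℕ)
    (H : Matrix (Fin Ng ⊕ Fin Ne) (Fin Ng ⊕ Fin Ne) ℂ) (hH : H.IsHermitian)
    (γ : Fin Ng → Fin Ne → ℝ)
    (Ps : Matrix (Fin Ng ⊕ Fin Ne) (Fin Ng ⊕ Fin Ne) ℂ)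
    (hPsProj : Ps * Ps = Ps)
    (hPsSub : Pg Ng Ne * Ps = Ps)
    (𝓔 : ℝ) (hspec : Pg Ng Ne * H * Pg Ng Ne * Ps = (𝓔 : ℂ) • Ps)
    (hrank : Ne + 1 ≤ Ps.rank) :
    ∃ ψ : Fin Ng ⊕ Fin Ne → ℂ, star ψ ⬝ᵥ ψ = 1 ∧ Ps *ᵥ ψ = ψ ∧
      (Qe Ng Ne * H) *ᵥ ψ = 0 ∧
      Lindblad Ng Ne H γ (vecMulVec ψ (star ψ)) = 0 ∧
      vecMulVec ψ (star ψ) = Pg Ng Ne * vecMulVec ψ (star ψ) * Pg Ng Ne := by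
  have hrank_lt : (Qe Ng Ne * H).rank < Module.finrank ℂ (LinearMap.range Ps.mulVecLin) :=
    ((rank_mul_le_left _ _).trans_eq rank_Qe).trans_lt hrank
  obtain ⟨v, hvPs, hv, hQHv⟩ := exists_ne_zero_mulVec_eq_zero_of_rank_lt _ _ hrank_lt
  obtain ⟨c, hc⟩ := exists_smul_star_dotProduct_self_eq_one hv
  have hPsψ : Ps *ᵥ (c • v) = c • v := by
    rw [mulVec_smul, mulVec_eq_self_of_mem_range hPsProj hvPs]
  have hQHψ : (Qe Ng Ne * H) *ᵥ (c • v) = 0 := by rw [mulVec_smul, hQHv, smul_zero]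
  have hPgψ : Pg Ng Ne *ᵥ (c • v) = c • v := by rw [← hPsψ, mulVec_mulVec, hPsSub]
  have hHψ := mulVec_eq_smul_of_Qe_mul_mulVec_eq_zero hspec hPsψ hPgψ hQHψ
  exact ⟨c • v, hc, hPsψ, hQHψ, Lindblad_vecMulVec_star_eq_zero hH γ hHψ hPgψ,
    (mul_vecMulVec_star_mul_eq_self Pg_conjTranspose hPgψ).symm⟩

theorem dark_state_exists_of_large_degenerate_subspace
    (Ng Ne : ℕ) (hNg : 1 ≤ Ng) (hNe : 1 ≤ Ne)
    (H : Matrix (Fin Ng ⊕ Fin Ne) (Fin Ng ⊕ Fin Ne) ℂ) (hH : H.IsHermitian)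
    (γ : Fin Ng → Fin Ne → ℝ) (hγ : ∀ i j, 0 ≤ γ i j)
    (hγpos : ∀ j, 0 < ∑ i, γ i j)
    (Ps : Matrix (Fin Ng ⊕ Fin Ne) (Fin Ng ⊕ Fin Ne) ℂ)
    (hPsHerm : Psᴴ = Ps) (hPsProj : Ps * Ps = Ps)
    (hPsSub : Pg Ng Ne * Ps = Ps)
    (𝓔 : ℝ) (hspec : Pg Ng Ne * H * Pg Ng Ne * Ps = (𝓔 : ℂ) • Ps)
    (hrank : Ne + 1 ≤ Ps.rank) :
    ∃ ψ : Fin Ng ⊕ Fin Ne → ℂ, star ψ ⬝ᵥ ψ = 1 ∧ Ps *ᵥ ψ = ψ ∧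
      (Qe Ng Ne * H) *ᵥ ψ = 0 ∧
      Lindblad Ng Ne H γ (vecMulVec ψ (star ψ)) = 0 ∧
      vecMulVec ψ (star ψ) = Pg Ng Ne * vecMulVec ψ (star ψ) * Pg Ng Ne :=
  dark_state_exists_of_large_degenerate_subspace_general Ng Ne H hH γ Ps hPsProj hPsSub 𝓔 hspec
    hrank
end

section
/- Let H be a Hermitian complex n×n matrix and Γ a positive semidefinite complex n×n matrix, and suppose (H − i·Γ)·v = μ·v for a nonzero vector v and a complex number μ with Im μ = 0. Then Γ·v = 0 and H·v = μ·v; i.e. non-decaying eigenvectors of H − i·Γ lie in the kernel of Γ and are genuine eigenvectors of H. -/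
open Matrix Complex BigOperators ComplexOrder

/-- Taking the imaginary part of `vᴴ (H - iΓ) v = μ vᴴ v`: only `Γ` contributes to it, since
`vᴴ H v` and `vᴴ v` are real. -/
theorem Matrix.IsHermitian.re_star_dotProduct_mulVec_eq_neg_im_mul {n : Type*} [Fintype n]
    {H Γ : Matrix n n ℂ} (hH : H.IsHermitian) {μ : ℂ} {v : n → ℂ}
    (heig : (H - I • Γ) *ᵥ v = μ • v) :
    (star v ⬝ᵥ Γ *ᵥ v).re = -(μ.im * (star v ⬝ᵥ v).re) := by
  have hform : star v ⬝ᵥ H *ᵥ v - I * (star v ⬝ᵥ Γ *ᵥ v) = μ * (star v ⬝ᵥ v) := by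
    simpa only [sub_mulVec, smul_mulVec, dotProduct_sub, dotProduct_smul, smul_eq_mul]
      using congrArg (star v ⬝ᵥ ·) heig
  have hH_im : (star v ⬝ᵥ H *ᵥ v).im = 0 := hH.im_star_dotProduct_mulVec_self v
  have hnorm_im : (star v ⬝ᵥ v).im = 0 :=
    (Complex.nonneg_iff.mp (dotProduct_star_self_nonneg v)).2.symm
  have him := congrArg Complex.im hform
  simp only [sub_im, mul_im, I_re, I_im, hH_im, hnorm_im] at him
  linarith

theorem real_eigenvalue_of_nonhermitian_lies_in_ker_Gamma_general
    {n : Type*} [Fintype n]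
    (H Γ : Matrix n n ℂ) (hH : H.IsHermitian) (hΓ : Γ.PosSemidef)
    (μ : ℂ) (v : n → ℂ)
    (heig : (H - Complex.I • Γ) *ᵥ v = μ • v) (hμ : μ.im = 0) :
    Γ *ᵥ v = 0 ∧ H *ᵥ v = μ • v := by
  have hΓ_re : (star v ⬝ᵥ Γ *ᵥ v).re = 0 := by
    rw [hH.re_star_dotProduct_mulVec_eq_neg_im_mul heig, hμ, zero_mul, neg_zero]
  have hΓ_form : star v ⬝ᵥ Γ *ᵥ v = 0 :=
    Complex.ext hΓ_re (hΓ.isHermitian.im_star_dotProduct_mulVec_self v)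
  have hΓv : Γ *ᵥ v = 0 := (hΓ.dotProduct_mulVec_zero_iff v).mp hΓ_form
  refine ⟨hΓv, ?_⟩
  simpa only [sub_mulVec, smul_mulVec, hΓv, smul_zero, sub_zero] using heig

theorem real_eigenvalue_of_nonhermitian_lies_in_ker_Gamma
    {n : Type*} [Fintype n] [DecidableEq n]
    (H Γ : Matrix n n ℂ) (hH : H.IsHermitian) (hΓ : Γ.PosSemidef)
    (μ : ℂ) (v : n → ℂ) (hv : v ≠ 0)
    (heig : (H - Complex.I • Γ) *ᵥ v = μ • v) (hμ : μ.im = 0) :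
    Γ *ᵥ v = 0 ∧ H *ᵥ v = μ • v :=
  real_eigenvalue_of_nonhermitian_lies_in_ker_Gamma_general H Γ hH hΓ μ v heig hμ
end
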